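/- Let S be a factorizable Boolean sublattice whose quarks have size at most 2. Then the following are equivalent: (a) S is a UFS; (b) for each connected component C of the pairing graph G_p(S), the Boolean sublattice generated by the edge set of C (each edge {a,b} regarded as the 2-element set {a,b}) is a UFS; (c) each connected component of G_p(S) is a tree with diameter at most 3. -/

import Mathlib

open scoped ENNReal

/-- A Boolean sublattice: a set of finite subsets of `ℕ` that contains `∅` and is
closed under binary unions (ordered by inclusion, with joins given by unions). -/
def IsBSL (S : Set (Finset ℕ)) : Prop :=
  ∅ ∈ S ∧ ∀ A ∈ S, ∀ B ∈ S, A ∪ B ∈ S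

/-- A quark of `S`: a nonempty element of `S` covering `∅` in `S`, i.e. there is no
`B ∈ S` with `∅ ⊊ B ⊊ A`. -/
def IsQuark (S : Set (Finset ℕ)) (A : Finset ℕ) : Prop :=
  A ∈ S ∧ A ≠ ∅ ∧ ∀ B ∈ S, B ≠ ∅ → ¬ B ⊂ A

/-- `z` is a factorization of `X` into quarks of `S`: a finite set of quarks whose
union is `X` such that no proper subset of `z` has union `X`. -/
def IsFactorization (S : Set (Finset ℕ)) (X : Finset ℕ) (z : Finset (Finset ℕ)) : Prop :=
  (∀ A ∈ z, IsQuark S A) ∧ z.sup id = X ∧ ∀ w, w ⊂ z → w.sup id ≠ X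

/-- The set `Z(X)` of factorizations of `X` in `S`. -/
def Factorizations (S : Set (Finset ℕ)) (X : Finset ℕ) : Set (Finset (Finset ℕ)) :=
  {z | IsFactorization S X z}

/-- `S` is factorizable: every nonempty element of `S` has a factorization. -/
def Factorizable (S : Set (Finset ℕ)) : Prop :=
  ∀ X ∈ S, X ≠ ∅ → (Factorizations S X).Nonempty

/-- `S` is a unique factorization semilattice: every nonempty element of `S` has
exactly one factorization. -/
def IsUFS (S : Set (Finset ℕ)) : Prop :=
  ∀ X ∈ S, X ≠ ∅ → ∃! z, z ∈ Factorizations S X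

/-- `S` is a half-factorial semilattice: for every nonempty `X ∈ S` the set of
factorization lengths of `X` is a singleton. -/
def IsHFS (S : Set (Finset ℕ)) : Prop :=
  ∀ X ∈ S, X ≠ ∅ → (Factorizations S X).Nonempty ∧
    ∀ z ∈ Factorizations S X, ∀ z' ∈ Factorizations S X, z.card = z'.card

/-- `S` is a length-factorial semilattice: two distinct factorizations of the same
nonempty element of `S` have different cardinalities. -/
def IsLFS (S : Set (Finset ℕ)) : Prop :=
  ∀ X ∈ S, X ≠ ∅ → ∀ z ∈ Factorizations S X, ∀ z' ∈ Factorizations S X,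
    z.card = z'.card → z = z'

/-- The Boolean sublattice generated by a collection `𝒜` of finite subsets of `ℕ`:
the smallest set of finite subsets of `ℕ` containing `{∅} ∪ 𝒜` and closed under
binary unions. -/
def genBSL (𝒜 : Set (Finset ℕ)) : Set (Finset ℕ) :=
  ⋂₀ {T | IsBSL T ∧ 𝒜 ⊆ T}

/-- An isolated quark: a quark disjoint from every other quark of `S`. -/
def IsIsolatedQuark (S : Set (Finset ℕ)) (A : Finset ℕ) : Prop :=
  IsQuark S A ∧ ∀ B, IsQuark S B → B ≠ A → Disjoint A B

/-- An excess quark: a quark each of whose elements belongs to some other quark. -/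
def IsExcessQuark (S : Set (Finset ℕ)) (A : Finset ℕ) : Prop :=
  IsQuark S A ∧ ∀ j ∈ A, ∃ B, IsQuark S B ∧ B ≠ A ∧ j ∈ B

/-- The quarkic graph of `S`: vertices are the quarks of `S`, with an edge between
distinct quarks having nonempty intersection. -/
def quarkicGraph (S : Set (Finset ℕ)) : SimpleGraph {A : Finset ℕ // IsQuark S A} :=
  SimpleGraph.fromRel (fun A B => ((A : Finset ℕ) ∩ (B : Finset ℕ)).Nonempty)

/-- The vertex set `V(C)` of a connected component of the quarkic graph, as a set of
finite subsets of `ℕ`. -/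
def compVerts (S : Set (Finset ℕ)) (C : (quarkicGraph S).ConnectedComponent) :
    Set (Finset ℕ) :=
  Subtype.val '' C.supp

/-- The pairing graph of `S` (for `S` with quarks of size at most 2): vertices are `ℕ`,
with an edge between distinct `a`, `b` whenever `{a, b}` is a quark of `S`. -/
def pairingGraph (S : Set (Finset ℕ)) : SimpleGraph ℕ :=
  SimpleGraph.fromRel (fun a b => IsQuark S {a, b})

/-- The edge set of a connected component `C` of the pairing graph, each edge `{a,b}`
regarded as the 2-element subset `{a, b}` of `ℕ`. -/
def compEdgeSets (S : Set (Finset ℕ)) (C : (pairingGraph S).ConnectedComponent) :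
    Set (Finset ℕ) :=
  {A | ∃ a b : ℕ, (pairingGraph S).Adj a b ∧ a ∈ C.supp ∧ A = {a, b}}

/-- `v` has degree at least `n` in `G` (valid also for infinite graphs). -/
def DegAtLeast {V : Type*} (G : SimpleGraph V) (v : V) (n : ℕ) : Prop :=
  ∃ s : Finset V, s.card = n ∧ ∀ u ∈ s, G.Adj v u

/-- `v` has degree exactly `n` in `G`: its neighbor set is a finite set of size `n`. -/
def DegExactly {V : Type*} (G : SimpleGraph V) (v : V) (n : ℕ) : Prop :=
  ∃ s : Finset V, s.card = n ∧ ∀ u, G.Adj v u ↔ u ∈ s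

/-- A leaf: a vertex of degree exactly 1. -/
def IsLeaf {V : Type*} (G : SimpleGraph V) (v : V) : Prop := DegExactly G v 1

/-- A candy graph: a connected simple graph of diameter at most 4 that contains a
cycle of length `k` if and only if `k = 4`. -/
def IsCandy {V : Type*} (G : SimpleGraph V) : Prop :=
  G.Connected ∧
  (∀ u v : V, ∃ p : G.Walk u v, p.length ≤ 4) ∧
  (∀ k : ℕ, (∃ (v : V) (c : G.Walk v v), c.IsCycle ∧ c.length = k) ↔ k = 4)

/-- The connected component `C` of `G` contains no cycle. -/
def CompAcyclic {V : Type*} (G : SimpleGraph V) (C : G.ConnectedComponent) : Prop :=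
  ∀ v ∈ C.supp, ∀ c : G.Walk v v, ¬ c.IsCycle

/-- Every path inside the connected component `C` has length at most `d` (for a tree
component this says its diameter is at most `d`). -/
def CompDiamLe {V : Type*} (G : SimpleGraph V) (C : G.ConnectedComponent) (d : ℕ) : Prop :=
  ∀ (u v : V), u ∈ C.supp → ∀ p : G.Walk u v, p.IsPath → p.length ≤ d

/-- The connected component `C` of `G` is (as an induced subgraph) the cycle graph on
`n` vertices. -/
def CompIsCycleGraph {V : Type*} (G : SimpleGraph V) (C : G.ConnectedComponent)
    (n : ℕ) : Prop :=
  ∃ v : Fin n → V, Function.Injective v ∧ C.supp = Set.range v ∧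
    ∀ i j : Fin n, G.Adj (v i) (v j) ↔
      ((j : ℕ) = ((i : ℕ) + 1) % n ∨ (i : ℕ) = ((j : ℕ) + 1) % n)

/-- The connected component `C` of `G` is (as an induced subgraph) a candy graph:
it has diameter at most 4 and contains a cycle of length `k` iff `k = 4`. -/
def CompIsCandy {V : Type*} (G : SimpleGraph V) (C : G.ConnectedComponent) : Prop :=
  (∀ u v, u ∈ C.supp → v ∈ C.supp → ∃ p : G.Walk u v, p.length ≤ 4) ∧
  (∀ k : ℕ, (∃ v ∈ C.supp, ∃ c : G.Walk v v, c.IsCycle ∧ c.length = k) ↔ k = 4)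

/-- The set of factorization lengths `L(X)` of `X` in `S`. -/
def lengthsOf (S : Set (Finset ℕ)) (X : Finset ℕ) : Set ℕ :=
  Finset.card '' Factorizations S X

/-- The elasticity `ρ(X) = sup L(X) / min L(X)` of a nonempty element `X` of `S`,
valued in the extended nonnegative reals. -/
noncomputable def elasticityOf (S : Set (Finset ℕ)) (X : Finset ℕ) : ℝ≥0∞ :=
  (⨆ n ∈ lengthsOf S X, (n : ℝ≥0∞)) / ((sInf (lengthsOf S X) : ℕ) : ℝ≥0∞)

/-- The elasticity `ρ(S)` of a Boolean sublattice `S`. -/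
noncomputable def elasticity (S : Set (Finset ℕ)) : ℝ≥0∞ :=
  ⨆ X ∈ {X | X ∈ S ∧ X ≠ ∅}, elasticityOf S X

/-!
A factorization is a minimal cover by quarks, and every quark is a singleton or an edge of the
pairing graph. A triangle, a square or a path with four edges gives two different minimal covers
of its vertex set by edges, and a graph avoiding these three configurations is exactly a forest
of trees of diameter at most `3`. Conversely, in such a forest an edge of one factorization that
is missing from another one would create one of the three configurations. The sublattice
generated by the edges of a component has exactly these edges as quarks, so (b) is (c) read
component by component.
-/

namespace SimpleGraph

variable {V : Type*} {G : SimpleGraph V}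

/-- The components are stars and double stars: the trees of diameter at most `3`. -/
def IsDoubleStarForest (G : SimpleGraph V) : Prop :=
  G.IsAcyclic ∧ ∀ ⦃u v : V⦄ (p : G.Walk u v), p.IsPath → p.length ≤ 3

theorem forall_compAcyclic_and_compDiamLe_iff {d : ℕ} :
    (∀ C, CompAcyclic G C ∧ CompDiamLe G C d) ↔
      G.IsAcyclic ∧ ∀ ⦃u v : V⦄ (p : G.Walk u v), p.IsPath → p.length ≤ d :=
  ⟨fun h => ⟨fun v => (h _).1 v rfl, fun u _ => (h _).2 u _ rfl⟩,
    fun h _ => ⟨fun _ _ c => h.1 c, fun _ _ _ p => h.2 p⟩⟩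

namespace IsDoubleStarForest

variable {a b c d e : V}

lemma not_triangle (hG : G.IsDoubleStarForest) (hab : G.Adj a b) (hbc : G.Adj b c)
    (hca : G.Adj c a) : False :=
  hG.1 (Walk.cons hab (.cons hbc (.cons hca .nil))) <| by
    simp [Walk.cons_isCycle_iff, hab.ne, hbc.ne, hca.ne, hab.ne.symm, hca.ne.symm]

lemma not_square (hG : G.IsDoubleStarForest) (hab : G.Adj a b) (hbc : G.Adj b c)
    (hcd : G.Adj c d) (hda : G.Adj d a) (hac : a ≠ c) (hbd : b ≠ d) : False :=
  hG.1 (Walk.cons hab (.cons hbc (.cons hcd (.cons hda .nil)))) <| by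
    simp [Walk.cons_isCycle_iff, hab.ne, hbc.ne, hcd.ne, hda.ne, hab.ne.symm, hda.ne.symm,
      hac, hbd, hac.symm]

lemma not_path4 (hG : G.IsDoubleStarForest) (hab : G.Adj a b) (hbc : G.Adj b c)
    (hcd : G.Adj c d) (hde : G.Adj d e) (h : [a, b, c, d, e].Nodup) : False := by
  have := hG.2 (.cons hab (.cons hbc (.cons hcd (.cons hde .nil)))) ((Walk.isPath_def _).2 h)
  simp at this

lemma anti {G' : SimpleGraph V} (hle : G' ≤ G) (hG : G.IsDoubleStarForest) :
    G'.IsDoubleStarForest :=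
  ⟨hG.1.anti hle, fun _ _ p hp => Walk.length_mapLe hle p ▸ hG.2 _ (hp.mapLe hle)⟩

end IsDoubleStarForest

lemma Walk.exists_path4 {u v : V} (p : G.Walk u v) (hlen : 4 ≤ p.length)
    (hinj : Set.InjOn p.getVert {i | i ≤ 4}) :
    ∃ a b c d e, G.Adj a b ∧ G.Adj b c ∧ G.Adj c d ∧ G.Adj d e ∧ [a, b, c, d, e].Nodup := by
  refine ⟨_, _, _, _, _, p.adj_getVert_succ (i := 0) (by omega),
    p.adj_getVert_succ (i := 1) (by omega), p.adj_getVert_succ (i := 2) (by omega),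
    p.adj_getVert_succ (i := 3) (by omega), ?_⟩
  change ((List.range 5).map p.getVert).Nodup
  exact List.nodup_range.map_on fun i hi j hj =>
    hinj (by simp at hi ⊢; omega) (by simp at hj ⊢; omega)

/-- A cycle of length at least `5`, and a path of length at least `4`, contain a path with
four edges. -/
theorem isDoubleStarForest_of_forall
    (h₃ : ∀ ⦃a b c⦄, G.Adj a b → G.Adj b c → G.Adj c a → False)
    (h₄ : ∀ ⦃a b c d⦄, G.Adj a b → G.Adj b c → G.Adj c d → G.Adj d a → a ≠ c → b ≠ d → False)
    (h₅ : ∀ ⦃a b c d e⦄, G.Adj a b → G.Adj b c → G.Adj c d → G.Adj d e →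
      [a, b, c, d, e].Nodup → False) :
    G.IsDoubleStarForest := by
  refine ⟨fun v c hc => ?_, fun u v p hp => ?_⟩
  · have hinj := hc.getVert_injOn'
    have adj (i : ℕ) (hi : i < c.length) := c.adj_getVert_succ hi
    have hclose (n : ℕ) (hn : c.length = n) : c.getVert n = c.getVert 0 := by
      rw [← hn, Walk.getVert_length, Walk.getVert_zero]
    obtain hn | hn | hn : c.length = 3 ∨ c.length = 4 ∨ 5 ≤ c.length := by
      have := hc.three_le_length; omega
    · exact h₃ (adj 0 (by omega)) (adj 1 (by omega)) (hclose 3 hn ▸ adj 2 (by omega))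
    · refine h₄ (adj 0 (by omega)) (adj 1 (by omega)) (adj 2 (by omega))
        (hclose 4 hn ▸ adj 3 (by omega)) (fun h => ?_) (fun h => ?_)
      all_goals
        have := hinj (by simp only [Set.mem_ofPred_eq]; omega)
          (by simp only [Set.mem_ofPred_eq]; omega) h
        omega
    · obtain ⟨a, b, c, d, e, hab, hbc, hcd, hde, hnd⟩ :=
        c.exists_path4 (by omega) (hinj.mono fun i hi => by simp at hi ⊢; omega)
      exact h₅ hab hbc hcd hde hnd
  · by_contra! hlen
    obtain ⟨a, b, c, d, e, hab, hbc, hcd, hde, hnd⟩ :=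
      p.exists_path4 hlen (hp.getVert_injOn.mono fun i hi => by simp at hi ⊢; omega)
    exact h₅ hab hbc hcd hde hnd

theorem forall_isDoubleStarForest_iff {H : G.ConnectedComponent → SimpleGraph V}
    (hH : ∀ C a b, (H C).Adj a b ↔ G.Adj a b ∧ a ∈ C.supp) :
    (∀ C, (H C).IsDoubleStarForest) ↔ G.IsDoubleStarForest := by
  have lift {C : G.ConnectedComponent} {x y : V} (hxy : G.Adj x y) (hx : x ∈ C.supp) :
      (H C).Adj x y ∧ y ∈ C.supp :=
    ⟨(hH C x y).2 ⟨hxy, hx⟩, (C.mem_supp_congr_adj hxy).1 hx⟩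
  refine ⟨fun h => isDoubleStarForest_of_forall ?_ ?_ ?_,
    fun h C => h.anti fun a b hab => ((hH C a b).1 hab).1⟩
  · intro a b c hab hbc hca
    obtain ⟨hab', hb⟩ := lift (C := G.connectedComponentMk a) hab rfl
    obtain ⟨hbc', hc⟩ := lift hbc hb
    exact (h _).not_triangle hab' hbc' (lift hca hc).1
  · intro a b c d hab hbc hcd hda hac hbd
    obtain ⟨hab', hb⟩ := lift (C := G.connectedComponentMk a) hab rfl
    obtain ⟨hbc', hc⟩ := lift hbc hb
    obtain ⟨hcd', hd⟩ := lift hcd hc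
    exact (h _).not_square hab' hbc' hcd' (lift hda hd).1 hac hbd
  · intro a b c d e hab hbc hcd hde hnd
    obtain ⟨hab', hb⟩ := lift (C := G.connectedComponentMk a) hab rfl
    obtain ⟨hbc', hc⟩ := lift hbc hb
    obtain ⟨hcd', hd⟩ := lift hcd hc
    exact (h _).not_path4 hab' hbc' hcd' (lift hde hd).1 hnd

end SimpleGraph

namespace Finset

theorem pair_eq_pair_iff {α : Type*} [DecidableEq α] {a b c d : α} :
    ({a, b} : Finset α) = {c, d} ↔ a = c ∧ b = d ∨ a = d ∧ b = c := by
  rw [← coe_inj, coe_pair, coe_pair, Set.pair_eq_pair_iff]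

theorem eq_singleton_or_eq_pair_of_mem {α : Type*} [DecidableEq α] {s : Finset α} {a : α}
    (ha : a ∈ s) (hs : s.card ≤ 2) : s = {a} ∨ ∃ b, a ≠ b ∧ s = {a, b} := by
  rcases (s.erase a).eq_empty_or_nonempty with h | ⟨b, hb⟩
  · exact Or.inl ((erase_eq_empty_iff s a).1 h |>.resolve_left (ne_empty_of_mem ha))
  · obtain ⟨hba, hbs⟩ := mem_erase.1 hb
    refine Or.inr ⟨b, hba.symm, (eq_of_subset_of_card_le ?_ ?_).symm⟩
    · exact insert_subset ha (singleton_subset_iff.2 hbs)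
    · rwa [card_pair hba.symm]

end Finset

open Finset SimpleGraph

section Factorization

variable {S : Set (Finset ℕ)} {X A B : Finset ℕ} {z z' z₁ z₂ : Finset (Finset ℕ)} {a b : ℕ}

lemma pairingGraph_adj : (pairingGraph S).Adj a b ↔ a ≠ b ∧ IsQuark S {a, b} := by
  simp [pairingGraph, pair_comm b a]

lemma IsQuark.eq_of_subset (hA : IsQuark S A) (hB : B ∈ S) (hB₀ : B ≠ ∅) (hBA : B ⊆ A) :
    B = A := by
  by_contra h
  exact hA.2.2 B hB hB₀ (hBA.ssubset_of_ne h)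

lemma IsBSL.sup_mem (hS : IsBSL S) (hz : ∀ A ∈ z, A ∈ S) : z.sup id ∈ S := by
  rcases z.eq_empty_or_nonempty with rfl | hne
  · exact hS.1
  · exact SupClosed.finsetSup_mem (fun A hA B hB => hS.2 A hA B hB) hne hz

lemma IsFactorization.subset_of_mem (hz : IsFactorization S X z) (hA : A ∈ z) : A ⊆ X :=
  hz.2.1 ▸ le_sup (f := id) hA

lemma IsFactorization.exists_private (hz : IsFactorization S X z) (hA : A ∈ z) :
    ∃ a ∈ A, ∀ B ∈ z, a ∈ B → B = A := by
  by_contra! h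
  refine hz.2.2 (z.erase A) (erase_ssubset hA) (le_antisymm ?_ ?_)
  · exact hz.2.1 ▸ sup_mono (erase_subset A z)
  · rw [← hz.2.1]
    refine Finset.sup_le fun B hB x hx => ?_
    by_cases hBA : B = A
    · obtain ⟨C, hC, hxC, hCA⟩ := h x (hBA ▸ hx)
      exact mem_sup.2 ⟨C, mem_erase.2 ⟨hCA, hC⟩, hxC⟩
    · exact mem_sup.2 ⟨B, mem_erase.2 ⟨hBA, hB⟩, hx⟩

/-- A proper subfamily of `z` covers at most `2 * (z.card - 1)` points, fewer than `X.card`. -/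
lemma isFactorization_of_card_lt (hz : ∀ A ∈ z, IsQuark S A ∧ A.card ≤ 2)
    (hX : z.sup id = X) (hcard : 2 * z.card < X.card + 2) : IsFactorization S X z := by
  refine ⟨fun A hA => (hz A hA).1, hX, fun w hw hwX => ?_⟩
  have hlt := card_lt_card hw
  have hle : (w.sup id).card ≤ w.card * 2 := by
    rw [sup_eq_biUnion]
    exact card_biUnion_le_card_mul _ _ _ fun A hA => (hz A (hw.subset hA)).2
  rw [hwX] at hle
  omega

lemma isQuark_and_card_le_of_adj (hab : (pairingGraph S).Adj a b) :
    IsQuark S {a, b} ∧ ({a, b} : Finset ℕ).card ≤ 2 :=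
  ⟨(pairingGraph_adj.1 hab).2, card_le_two⟩

lemma not_isUFS_of_two_covers (hS : IsBSL S) {l : List ℕ} (hl : l.Nodup)
    (hz₁ : ∀ A ∈ z₁, IsQuark S A ∧ A.card ≤ 2) (hz₂ : ∀ A ∈ z₂, IsQuark S A ∧ A.card ≤ 2)
    (hsup₁ : z₁.sup id = l.toFinset) (hsup₂ : z₂.sup id = l.toFinset)
    {n : ℕ} (hcard₁ : z₁.card ≤ n) (hcard₂ : z₂.card ≤ n) (hn : 2 * n < l.length + 2)
    (hne : z₁ ≠ z₂) : ¬ IsUFS S := by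
  intro hufs
  rw [← List.toFinset_card_of_nodup hl] at hn
  have hX : l.toFinset ≠ ∅ := by
    intro h
    rw [h, card_empty] at hn
    have h₁ : z₁ = ∅ := card_eq_zero.1 (by omega)
    have h₂ : z₂ = ∅ := card_eq_zero.1 (by omega)
    exact hne (h₁.trans h₂.symm)
  exact hne <| (hufs _ (hsup₁ ▸ hS.sup_mem fun A hA => (hz₁ A hA).1.1) hX).unique
    (isFactorization_of_card_lt hz₁ hsup₁ (by omega))
    (isFactorization_of_card_lt hz₂ hsup₂ (by omega))

variable {c d e : ℕ}

lemma not_isUFS_of_triangle (hS : IsBSL S) (hab : (pairingGraph S).Adj a b)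
    (hbc : (pairingGraph S).Adj b c) (hca : (pairingGraph S).Adj c a) : ¬ IsUFS S := by
  have hl : [a, b, c].Nodup := by simp [hab.ne, hbc.ne, hca.ne.symm]
  refine not_isUFS_of_two_covers (z₁ := {{a, b}, {b, c}}) (z₂ := {{a, b}, {c, a}}) hS hl
    ?_ ?_ ?_ ?_ card_le_two card_le_two (by simp) fun h => ?_
  · simp [isQuark_and_card_le_of_adj hab, isQuark_and_card_le_of_adj hbc]
  · simp [isQuark_and_card_le_of_adj hab, isQuark_and_card_le_of_adj hca]
  · ext; simp
  · ext; simp; tauto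
  · have : ({b, c} : Finset ℕ) ∈ ({{a, b}, {c, a}} : Finset (Finset ℕ)) := h ▸ by simp
    simp [pair_eq_pair_iff] at this hl
    tauto

lemma not_isUFS_of_square (hS : IsBSL S) (hab : (pairingGraph S).Adj a b)
    (hbc : (pairingGraph S).Adj b c) (hcd : (pairingGraph S).Adj c d)
    (hda : (pairingGraph S).Adj d a) (hac : a ≠ c) (hbd : b ≠ d) : ¬ IsUFS S := by
  have hl : [a, b, c, d].Nodup := by simp [hab.ne, hbc.ne, hcd.ne, hda.ne.symm, hac, hbd]
  refine not_isUFS_of_two_covers (z₁ := {{a, b}, {c, d}}) (z₂ := {{b, c}, {d, a}}) hS hl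
    ?_ ?_ ?_ ?_ card_le_two card_le_two (by simp) fun h => ?_
  · simp [isQuark_and_card_le_of_adj hab, isQuark_and_card_le_of_adj hcd]
  · simp [isQuark_and_card_le_of_adj hbc, isQuark_and_card_le_of_adj hda]
  · ext; simp; tauto
  · ext; simp; tauto
  · have : ({a, b} : Finset ℕ) ∈ ({{b, c}, {d, a}} : Finset (Finset ℕ)) := h ▸ by simp
    simp [pair_eq_pair_iff] at this hl
    tauto

lemma not_isUFS_of_path4 (hS : IsBSL S) (hab : (pairingGraph S).Adj a b)
    (hbc : (pairingGraph S).Adj b c) (hcd : (pairingGraph S).Adj c d)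
    (hde : (pairingGraph S).Adj d e) (hl : [a, b, c, d, e].Nodup) : ¬ IsUFS S := by
  refine not_isUFS_of_two_covers (z₁ := {{a, b}, {c, d}, {d, e}}) (z₂ := {{a, b}, {b, c}, {d, e}})
    hS hl ?_ ?_ ?_ ?_ card_le_three card_le_three (by simp) fun h => ?_
  · simp [isQuark_and_card_le_of_adj hab, isQuark_and_card_le_of_adj hcd,
      isQuark_and_card_le_of_adj hde]
  · simp [isQuark_and_card_le_of_adj hab, isQuark_and_card_le_of_adj hbc,
      isQuark_and_card_le_of_adj hde]
  · ext; simp; tauto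
  · ext; simp; tauto
  · have : ({c, d} : Finset ℕ) ∈ ({{a, b}, {b, c}, {d, e}} : Finset (Finset ℕ)) := h ▸ by simp
    simp [pair_eq_pair_iff] at this hl
    tauto

theorem isDoubleStarForest_of_isUFS (hS : IsBSL S) (h : IsUFS S) :
    (pairingGraph S).IsDoubleStarForest :=
  isDoubleStarForest_of_forall (fun _ _ _ hab hbc hca => not_isUFS_of_triangle hS hab hbc hca h)
    (fun _ _ _ _ hab hbc hcd hda hac hbd => not_isUFS_of_square hS hab hbc hcd hda hac hbd h)
    (fun _ _ _ _ _ hab hbc hcd hde hl => not_isUFS_of_path4 hS hab hbc hcd hde hl h)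

lemma IsFactorization.singleton_mem (hz : IsFactorization S X z) (ha : IsQuark S {a})
    (haX : a ∈ X) : {a} ∈ z := by
  obtain ⟨Q, hQ, haQ⟩ := mem_sup.1 (hz.2.1 ▸ haX)
  rwa [(hz.1 Q hQ).eq_of_subset ha.1 ha.2.1 (singleton_subset_iff.2 haQ)]

variable (hq : ∀ A, IsQuark S A → A.card ≤ 2)
include hq

/-- A point of an edge cannot be covered by a singleton quark, since that would sit strictly
below the edge. -/
lemma IsFactorization.exists_adj_pair_mem (hz : IsFactorization S X z)
    (hab : (pairingGraph S).Adj a b) (haX : a ∈ X) :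
    ∃ x, (pairingGraph S).Adj a x ∧ {a, x} ∈ z := by
  obtain ⟨Q, hQ, haQ⟩ := mem_sup.1 (hz.2.1 ▸ haX)
  rcases eq_singleton_or_eq_pair_of_mem haQ (hq Q (hz.1 Q hQ)) with rfl | ⟨x, hax, rfl⟩
  · have hab' := pairingGraph_adj.1 hab
    have h := congrArg card (hab'.2.eq_of_subset (hz.1 _ hQ).1 (hz.1 _ hQ).2.1 (by simp))
    rw [card_singleton, card_pair hab'.1] at h
    omega
  · exact ⟨x, pairingGraph_adj.2 ⟨hax, hz.1 _ hQ⟩, hQ⟩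

/-- If the edge `{p, q}` of `z` is missing from `z'`, then `z'` covers `p` and `q` by edges
`{p, x}`, `{q, y}`, and `z` covers `x` by an edge `{x, u}` with `u ≠ p` because `p` is private;
the vertices `u, x, p, q, y` then span a triangle, a square or a path with four edges. -/
lemma IsFactorization.pair_mem_of_private (hG : (pairingGraph S).IsDoubleStarForest)
    (hz : IsFactorization S X z) (hz' : IsFactorization S X z') {p q : ℕ}
    (hpq : (pairingGraph S).Adj p q) (hA : {p, q} ∈ z) (hpriv : ∀ B ∈ z, p ∈ B → B = {p, q}) :
    {p, q} ∈ z' := by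
  by_contra hA'
  have hX := hz.subset_of_mem hA
  obtain ⟨x, hpx, hx⟩ := hz'.exists_adj_pair_mem hq hpq (hX (by simp))
  obtain ⟨y, hqy, hy⟩ := hz'.exists_adj_pair_mem hq hpq.symm (hX (by simp))
  obtain ⟨u, hxu, hu⟩ := hz.exists_adj_pair_mem hq hpx.symm (hz'.subset_of_mem hx (by simp))
  have hxq : x ≠ q := by rintro rfl; exact hA' hx
  have hyp : y ≠ p := by
    intro h
    rw [h, pair_comm] at hy
    exact hA' hy
  have hup : u ≠ p := by
    rintro rfl
    have := hpriv _ hu (by simp)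
    simp [pair_eq_pair_iff, hxq, hpx.ne.symm] at this
  by_cases hxy : x = y
  · subst hxy; exact hG.not_triangle hpq hqy hpx.symm
  by_cases huq : u = q
  · subst huq; exact hG.not_triangle hpx hxu hpq.symm
  by_cases huy : u = y
  · subst huy; exact hG.not_square hpx hxu hqy.symm hpq.symm hyp.symm hxq
  exact hG.not_path4 hxu.symm hpx.symm hpq hqy <| by
    simp [hxu.ne.symm, hup, huq, huy, hpx.ne.symm, hxq, hxy, hpq.ne, hyp.symm, hqy.ne]

lemma IsFactorization.subset (hG : (pairingGraph S).IsDoubleStarForest)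
    (hz : IsFactorization S X z) (hz' : IsFactorization S X z') : z ⊆ z' := by
  intro A hA
  obtain ⟨p, hpA, hpriv⟩ := hz.exists_private hA
  rcases eq_singleton_or_eq_pair_of_mem hpA (hq A (hz.1 A hA)) with rfl | ⟨q, hpq, rfl⟩
  · exact hz'.singleton_mem (hz.1 _ hA) (hz.subset_of_mem hA (by simp))
  · exact hz.pair_mem_of_private hq hG hz' (pairingGraph_adj.2 ⟨hpq, hz.1 _ hA⟩) hA hpriv

theorem isUFS_iff_isDoubleStarForest (hS : IsBSL S) (hfac : Factorizable S) :
    IsUFS S ↔ (pairingGraph S).IsDoubleStarForest := by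
  refine ⟨isDoubleStarForest_of_isUFS hS, fun hG X hX hX₀ => ?_⟩
  obtain ⟨z, hz⟩ := hfac X hX hX₀
  exact ⟨z, hz, fun z' hz' => (hz'.subset hq hG hz).antisymm (hz.subset hq hG hz')⟩

end Factorization

section Generated

variable {𝒜 : Set (Finset ℕ)} {X A : Finset ℕ}

lemma genBSL_isBSL (𝒜 : Set (Finset ℕ)) : IsBSL (genBSL 𝒜) :=
  ⟨fun _ hT => hT.1.1, fun _ hA _ hB T hT => hT.1.2 _ (hA T hT) _ (hB T hT)⟩

lemma subset_genBSL : 𝒜 ⊆ genBSL 𝒜 :=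
  fun _ hA _ hT => hT.2 hA

lemma exists_sup_eq_of_mem_genBSL (hX : X ∈ genBSL 𝒜) :
    ∃ F : Finset (Finset ℕ), ↑F ⊆ 𝒜 ∧ F.sup id = X := by
  refine hX {X | ∃ F : Finset (Finset ℕ), ↑F ⊆ 𝒜 ∧ F.sup id = X} ⟨⟨⟨∅, by simp, rfl⟩, ?_⟩, ?_⟩
  · rintro _ ⟨F, hF, rfl⟩ _ ⟨F', hF', rfl⟩
    exact ⟨F ∪ F', by simp [hF, hF'], sup_union⟩
  · exact fun A hA => ⟨{A}, by simpa using hA, sup_singleton⟩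

lemma exists_subset_of_mem_genBSL (hX : X ∈ genBSL 𝒜) (hX₀ : X ≠ ∅) : ∃ A ∈ 𝒜, A ⊆ X := by
  obtain ⟨F, hF, rfl⟩ := exists_sup_eq_of_mem_genBSL hX
  obtain ⟨A, hA⟩ := nonempty_of_ne_empty (s := F) fun h => hX₀ (by simp [h])
  exact ⟨A, hF hA, le_sup (f := id) hA⟩

variable (h𝒜 : IsAntichain (· ⊆ ·) 𝒜) (h𝒜₀ : ∅ ∉ 𝒜)
include h𝒜 h𝒜₀

lemma isQuark_genBSL_iff : IsQuark (genBSL 𝒜) A ↔ A ∈ 𝒜 := by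
  refine ⟨fun hA => ?_, fun hA => ⟨subset_genBSL hA, fun h => h𝒜₀ (h ▸ hA), ?_⟩⟩
  · obtain ⟨B, hB, hBA⟩ := exists_subset_of_mem_genBSL hA.1 hA.2.1
    rwa [← hA.eq_of_subset (subset_genBSL hB) (fun h => h𝒜₀ (h ▸ hB)) hBA]
  · intro B hB hB₀ hBA
    obtain ⟨C, hC, hCB⟩ := exists_subset_of_mem_genBSL hB hB₀
    exact hBA.not_subset (h𝒜.eq hC hA (hCB.trans hBA.subset) ▸ hCB)

lemma factorizable_genBSL : Factorizable (genBSL 𝒜) := by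
  intro X hX _
  obtain ⟨F, hF, hFX⟩ := exists_sup_eq_of_mem_genBSL hX
  obtain ⟨z, hzF, hz, hmin⟩ := exists_minimal_le_of_wellFoundedLT (·.sup id = X) F hFX
  exact ⟨z, fun A hA => (isQuark_genBSL_iff h𝒜 h𝒜₀).2 (hF (hzF hA)), hz,
    fun w hw hwX => hw.2 (hmin hwX hw.1)⟩

end Generated

section Component

variable {S : Set (Finset ℕ)} {C : (pairingGraph S).ConnectedComponent}

lemma compEdgeSets_sized : (compEdgeSets S C).Sized 2 := by
  rintro _ ⟨a, b, hab, -, rfl⟩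
  exact card_pair hab.ne

lemma empty_notMem_compEdgeSets : ∅ ∉ compEdgeSets S C :=
  fun h => by simpa using compEdgeSets_sized h

lemma pairingGraph_genBSL_compEdgeSets_adj {a b : ℕ} :
    (pairingGraph (genBSL (compEdgeSets S C))).Adj a b ↔
      (pairingGraph S).Adj a b ∧ a ∈ C.supp := by
  rw [pairingGraph_adj,
    isQuark_genBSL_iff compEdgeSets_sized.isAntichain empty_notMem_compEdgeSets]
  constructor
  · rintro ⟨-, x, y, hxy, hx, heq⟩
    rcases pair_eq_pair_iff.1 heq with ⟨rfl, rfl⟩ | ⟨rfl, rfl⟩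
    · exact ⟨hxy, hx⟩
    · exact ⟨hxy.symm, (C.mem_supp_congr_adj hxy).1 hx⟩
  · rintro ⟨hab, ha⟩
    exact ⟨hab.ne, a, b, hab, ha, rfl⟩

lemma isUFS_genBSL_compEdgeSets_iff :
    IsUFS (genBSL (compEdgeSets S C)) ↔
      (pairingGraph (genBSL (compEdgeSets S C))).IsDoubleStarForest := by
  have h𝒜 := (compEdgeSets_sized (S := S) (C := C)).isAntichain
  exact isUFS_iff_isDoubleStarForest
    (fun A h => (compEdgeSets_sized ((isQuark_genBSL_iff h𝒜 empty_notMem_compEdgeSets).1 h)).le)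
    (genBSL_isBSL _) (factorizable_genBSL h𝒜 empty_notMem_compEdgeSets)

end Component

/-- For a factorizable Boolean sublattice `S` whose quarks have size at
most 2, the following are equivalent: (a) `S` is a UFS; (b) for each connected
component `C` of the pairing graph, the Boolean sublattice generated by the edge set
of `C` is a UFS; (c) each connected component of the pairing graph is a tree with
diameter at most 3. -/
theorem stmt_9 (S : Set (Finset ℕ)) (hS : IsBSL S) (hfac : Factorizable S)
    (hq : ∀ A : Finset ℕ, IsQuark S A → A.card ≤ 2) :
    (IsUFS S ↔
      ∀ C : (pairingGraph S).ConnectedComponent, IsUFS (genBSL (compEdgeSets S C))) ∧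
    (IsUFS S ↔
      ∀ C : (pairingGraph S).ConnectedComponent,
        CompAcyclic (pairingGraph S) C ∧ CompDiamLe (pairingGraph S) C 3) := by
  rw [isUFS_iff_isDoubleStarForest hq hS hfac]
  refine ⟨?_, forall_compAcyclic_and_compDiamLe_iff.symm⟩
  simp only [isUFS_genBSL_compEdgeSets_iff]
  exact (forall_isDoubleStarForest_iff fun _ _ _ => pairingGraph_genBSL_compEdgeSets_adj).symm
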